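/- arXiv:0902.0801 — 3 statements merged into one kernel-verified Lean document; each statement's English description precedes it below -/
import Mathlib

section
/- Let S = k⟨x_1,...,x_θ⟩/(x_i x_j - q_{ij} x_j x_i, x_i^{N_i}). For θ-tuples of nonnegative integers define K_n = ⊕_{a_1+···+a_θ = n} S·Φ(a_1,...,a_θ), with differential d = d_1 + ··· + d_θ where d_i(Φ(a_1,...,a_θ)) = (∏_{ℓ<i} (-1)^{a_ℓ} q_{ℓi}^{σ_i(a_i)τ_ℓ(a_ℓ)}) x_i^{σ_i(a_i)} Φ(a_1,...,a_i−1,...,a_θ) for a_i > 0 (and 0 if a_i = 0), where σ_i(a) = 1 if a is odd and N_i−1 if a is even, and τ_i(a) = Σ_{j=1}^a σ_i(j). Then d² = 0; more precisely d_i² = 0 for each i and d_i d_j + d_j d_i = 0 for all i ≠ j. -/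
open FreeAlgebra

variable (k : Type) [Field k]

/-- Relations of a quantum complete intersection. -/
inductive qciRel (θ : ℕ) (N : Fin θ → ℕ) (q : Fin θ → Fin θ → kˣ) :
    FreeAlgebra k (Fin θ) → FreeAlgebra k (Fin θ) → Prop
  | comm (i j : Fin θ) (hij : i < j) :
      qciRel θ N q (ι k i * ι k j) ((q i j : k) • (ι k j * ι k i))
  | nil (i : Fin θ) : qciRel θ N q (ι k i ^ N i) 0

/-- The quantum complete intersection algebra `S`. -/
abbrev QCI (θ : ℕ) (N : Fin θ → ℕ) (q : Fin θ → Fin θ → kˣ) : Type :=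
  RingQuot (qciRel k θ N q)

variable (θ : ℕ) (N : Fin θ → ℕ) (q : Fin θ → Fin θ → kˣ)

/-- The generator `x_i` of `S`. -/
noncomputable def xgen (i : Fin θ) : QCI k θ N q :=
  RingQuot.mkAlgHom k (qciRel k θ N q) (ι k i)

/-- `σ_i(a) = 1` if `a` is odd, `N_i - 1` if `a` is even. -/
def sigmaExp (Ni a : ℕ) : ℕ := if Odd a then 1 else Ni - 1

/-- `τ_i(a) = Σ_{j=1}^a σ_i(j)`, `τ_i(0) = 0`. -/
def tauExp (Ni a : ℕ) : ℕ := ∑ j ∈ Finset.range a, sigmaExp Ni (j + 1)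

/-- Right multiplication by an element, as a left `S`-linear endomorphism. -/
noncomputable def rmul (c : QCI k θ N q) : QCI k θ N q →ₗ[QCI k θ N q] QCI k θ N q where
  toFun s := s * c
  map_add' a b := add_mul a b c
  map_smul' a b := by simp [smul_eq_mul, mul_assoc]

/-- The free module `K = ⊕_{(a_1,…,a_θ)} S·Φ(a_1,…,a_θ)` underlying the Koszul-type
complex for `S`. -/
abbrev Kmod : Type := (Fin θ → ℕ) →₀ QCI k θ N q

/-- The scalar `∏_{ℓ<i} (-1)^{a_ℓ} q_{ℓi}^{σ_i(a_i) τ_ℓ(a_ℓ)}`. -/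
noncomputable def dCoeff (i : Fin θ) (a : Fin θ → ℕ) : k :=
  ∏ ℓ ∈ Finset.univ.filter (fun ℓ : Fin θ => ℓ < i),
    ((-1 : k) ^ (a ℓ) * (q ℓ i : k) ^ (sigmaExp (N i) (a i) * tauExp (N ℓ) (a ℓ)))

/-- The differential `d_i`, sending `Φ(a)` to
`(∏_{ℓ<i} (-1)^{a_ℓ} q_{ℓi}^{σ_i(a_i)τ_ℓ(a_ℓ)}) x_i^{σ_i(a_i)} Φ(a - e_i)`
(and to `0` if `a_i = 0`), extended `S`-linearly. -/
noncomputable def dmap (i : Fin θ) : Kmod k θ N q →ₗ[QCI k θ N q] Kmod k θ N q :=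
  Finsupp.lsum ℕ fun a =>
    if a i = 0 then 0
    else (Finsupp.lsingle (Function.update a i (a i - 1))).comp
      (rmul k θ N q
        (algebraMap k (QCI k θ N q) (dCoeff k θ N q i a) *
          xgen k θ N q i ^ sigmaExp (N i) (a i)))

/-! ### Auxiliary lemmas -/

lemma xgen_pow_N (i : Fin θ) : xgen k θ N q i ^ N i = 0 := by
  have h := RingQuot.mkAlgHom_rel k (qciRel.nil (k := k) (N := N) (q := q) i)
  simpa [xgen, map_pow] using h

lemma xgen_comm (i j : Fin θ) (h : i < j) :
    xgen k θ N q i * xgen k θ N q j =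
      algebraMap k (QCI k θ N q) (q i j : k) * (xgen k θ N q j * xgen k θ N q i) := by
  have h2 := RingQuot.mkAlgHom_rel k (qciRel.comm (k := k) (N := N) (q := q) i j h)
  simpa [xgen, map_mul, map_smul, Algebra.smul_def] using h2

lemma xgen_pow_comm_one (i j : Fin θ) (h : i < j) (n : ℕ) :
    xgen k θ N q i * xgen k θ N q j ^ n =
      algebraMap k (QCI k θ N q) ((q i j : k) ^ n) * (xgen k θ N q j ^ n * xgen k θ N q i) := by
  induction n with
  | zero => simp
  | succ n ih =>
    rw [pow_succ, ← mul_assoc, ih, mul_assoc, mul_assoc, xgen_comm k θ N q i j h,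
      pow_succ, map_mul]
    rw [← mul_assoc (xgen k θ N q j ^ n)]
    rw [← Algebra.commutes ((q i j : k)) (xgen k θ N q j ^ n)]
    simp [mul_assoc]

lemma xgen_pow_comm (i j : Fin θ) (h : i < j) (m n : ℕ) :
    xgen k θ N q i ^ m * xgen k θ N q j ^ n =
      algebraMap k (QCI k θ N q) ((q i j : k) ^ (m * n)) *
        (xgen k θ N q j ^ n * xgen k θ N q i ^ m) := by
  induction m with
  | zero => simp
  | succ m ih =>
    rw [pow_succ, mul_assoc (xgen k θ N q i ^ m), xgen_pow_comm_one k θ N q i j h n,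
      ← mul_assoc, ← Algebra.commutes ((q i j : k) ^ n) (xgen k θ N q i ^ m),
      mul_assoc _ (xgen k θ N q i ^ m), ← mul_assoc (xgen k θ N q i ^ m), ih]
    simp only [← mul_assoc, ← map_mul, ← pow_add]
    have : n + m * n = (m + 1) * n := by ring
    rw [this]


lemma dmap_single (i : Fin θ) (a : Fin θ → ℕ) (s : QCI k θ N q) :
    dmap k θ N q i (Finsupp.single a s) =
      if a i = 0 then 0
      else Finsupp.single (Function.update a i (a i - 1))
        (s * (algebraMap k (QCI k θ N q) (dCoeff k θ N q i a) *
          xgen k θ N q i ^ sigmaExp (N i) (a i))) := by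
  rw [dmap, Finsupp.lsum_single]
  split_ifs with h
  · simp
  · rfl

lemma tau_succ (Ni m : ℕ) : tauExp Ni (m + 1) = tauExp Ni m + sigmaExp Ni (m + 1) := by
  simp [tauExp, Finset.sum_range_succ]

lemma sigma_add (Ni a : ℕ) (ha : a ≠ 0) (h2 : 2 ≤ Ni) :
    sigmaExp Ni a + sigmaExp Ni (a - 1) = Ni := by
  obtain ⟨b, rfl⟩ := Nat.exists_eq_succ_of_ne_zero ha
  rcases Nat.even_or_odd b with hb | hb
  · have h1 : Odd (b + 1) := Even.add_one hb
    have h2' : ¬ Odd b := by simpa [Nat.not_odd_iff_even] using hb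
    simp [sigmaExp, h1, h2']
    omega
  · have h1 : ¬ Odd (b + 1) := by simp [Nat.odd_add_one, Nat.not_even_iff_odd, hb]
    simp [sigmaExp, h1, hb]
    omega

lemma central_rearrange (s X Y : QCI k θ N q) (r r' : k) :
    s * (algebraMap k (QCI k θ N q) r * X) * (algebraMap k (QCI k θ N q) r' * Y) =
      s * (algebraMap k (QCI k θ N q) (r * r') * (X * Y)) := by
  have hc : X * (algebraMap k (QCI k θ N q) r' * Y)
      = algebraMap k (QCI k θ N q) r' * (X * Y) := by
    rw [← mul_assoc, ← Algebra.commutes, mul_assoc]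
  simp only [map_mul, mul_assoc, hc]

lemma dCoeff_update_lt (i j : Fin θ) (h : i < j) (a : Fin θ → ℕ) (m : ℕ) :
    dCoeff k θ N q i (Function.update a j m) = dCoeff k θ N q i a := by
  unfold dCoeff
  refine Finset.prod_congr rfl fun ℓ hℓ => ?_
  simp only [Finset.mem_filter, Finset.mem_univ, true_and] at hℓ
  rw [Function.update_of_ne (ne_of_lt (hℓ.trans h)), Function.update_of_ne (ne_of_lt h)]

lemma dCoeff_step (i j : Fin θ) (h : i < j) (a : Fin θ → ℕ) (ha : a i ≠ 0) :
    dCoeff k θ N q j (Function.update a i (a i - 1)) *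
      (-1 * (q i j : k) ^ (sigmaExp (N i) (a i) * sigmaExp (N j) (a j))) =
    dCoeff k θ N q j a := by
  have hmem : i ∈ Finset.univ.filter (fun ℓ : Fin θ => ℓ < j) := by
    simp [h]
  unfold dCoeff
  rw [← Finset.mul_prod_erase _ _ hmem, ← Finset.mul_prod_erase _ _ hmem]
  have hrest : ∀ ℓ ∈ (Finset.univ.filter (fun ℓ : Fin θ => ℓ < j)).erase i,
      ((-1 : k) ^ (Function.update a i (a i - 1) ℓ) *
        (q ℓ j : k) ^ (sigmaExp (N j) (Function.update a i (a i - 1) j) *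
          tauExp (N ℓ) (Function.update a i (a i - 1) ℓ))) =
      ((-1 : k) ^ (a ℓ) * (q ℓ j : k) ^ (sigmaExp (N j) (a j) * tauExp (N ℓ) (a ℓ))) := by
    intro ℓ hℓ
    have hℓi : ℓ ≠ i := Finset.ne_of_mem_erase hℓ
    rw [Function.update_of_ne hℓi, Function.update_of_ne (ne_of_lt h).symm]
  rw [Finset.prod_congr rfl hrest]
  rw [Function.update_self, Function.update_of_ne (ne_of_lt h).symm]
  have hai : a i - 1 + 1 = a i := Nat.succ_pred_eq_of_ne_zero ha
  have htau : tauExp (N i) (a i) = tauExp (N i) (a i - 1) + sigmaExp (N i) (a i) := by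
    conv_lhs => rw [← hai, tau_succ, hai]
  rw [htau]
  have hpow : (-1 : k) ^ (a i) = (-1 : k) ^ (a i - 1) * (-1) := by
    conv_lhs => rw [← hai, pow_succ]
  rw [hpow, mul_add, pow_add]
  ring

lemma central_rearrange' (s X Y : QCI k θ N q) (r r' r'' : k)
    (hq : X * Y = algebraMap k (QCI k θ N q) r'' * (Y * X)) :
    s * (algebraMap k (QCI k θ N q) r * X) * (algebraMap k (QCI k θ N q) r' * Y)
      = s * (algebraMap k (QCI k θ N q) (r * r' * r'') * (Y * X)) := by
  have hc : X * (algebraMap k (QCI k θ N q) r' * Y)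
      = algebraMap k (QCI k θ N q) r' * (X * Y) := by
    rw [← mul_assoc, ← Algebra.commutes, mul_assoc]
  simp only [map_mul, mul_assoc, hc, hq]

lemma payload_sum (s W : QCI k θ N q) (u v : k) (huv : u + v = 0) :
    s * (algebraMap k (QCI k θ N q) u * W) + s * (algebraMap k (QCI k θ N q) v * W) = 0 := by
  rw [← mul_add, ← add_mul, ← map_add, huv, map_zero, zero_mul, mul_zero]

lemma dd_self (hN : ∀ i, 2 ≤ N i) (i : Fin θ) :
    (dmap k θ N q i).comp (dmap k θ N q i) = 0 := by
  refine Finsupp.lhom_ext fun a s => ?_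
  rw [LinearMap.comp_apply, LinearMap.zero_apply, dmap_single]
  by_cases h0 : a i = 0
  · simp [h0]
  rw [if_neg h0, dmap_single]
  simp only [Function.update_self]
  by_cases h1 : a i - 1 = 0
  · simp [h1]
  rw [if_neg h1, central_rearrange, ← pow_add, sigma_add (N i) (a i) h0 (hN i),
    xgen_pow_N, mul_zero, mul_zero, Finsupp.single_zero]

lemma dd_anticomm (i j : Fin θ) (hij : i < j) :
    (dmap k θ N q i).comp (dmap k θ N q j) + (dmap k θ N q j).comp (dmap k θ N q i) = 0 := by
  have hijne : i ≠ j := ne_of_lt hij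
  have hji : j ≠ i := hijne.symm
  refine Finsupp.lhom_ext fun a s => ?_
  rw [LinearMap.add_apply, LinearMap.comp_apply, LinearMap.comp_apply, LinearMap.zero_apply,
    dmap_single k θ N q j a s, dmap_single k θ N q i a s]
  by_cases h0 : a i = 0
  · rw [if_pos h0, map_zero, add_zero]
    by_cases hj0 : a j = 0
    · rw [if_pos hj0, map_zero]
    · rw [if_neg hj0, dmap_single, Function.update_of_ne hijne, if_pos h0]
  by_cases hj0 : a j = 0
  · rw [if_pos hj0, map_zero, zero_add, if_neg h0, dmap_single,
      Function.update_of_ne hji, if_pos hj0]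
  rw [if_neg h0, if_neg hj0, dmap_single, dmap_single]
  simp only [Function.update_of_ne hijne, Function.update_of_ne hji]
  rw [if_neg h0, if_neg hj0]
  rw [dCoeff_update_lt k θ N q i j hij]
  rw [← Function.update_comm hijne (a i - 1) (a j - 1) a]
  rw [← Finsupp.single_add]
  have hstep := dCoeff_step k θ N q i j hij a h0
  rw [central_rearrange k θ N q s _ _ (dCoeff k θ N q j a) (dCoeff k θ N q i a),
    central_rearrange' k θ N q s _ _ (dCoeff k θ N q i a)
      (dCoeff k θ N q j (Function.update a i (a i - 1)))
      ((q i j : k) ^ (sigmaExp (N i) (a i) * sigmaExp (N j) (a j)))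
      (xgen_pow_comm k θ N q i j hij _ _)]
  rw [payload_sum k θ N q s _ _ _
    (by linear_combination (-(dCoeff k θ N q i a)) * hstep), Finsupp.single_zero]

theorem koszul_differential_squares_to_zero (hN : ∀ i, 2 ≤ N i) :
    (∀ i, (dmap k θ N q i).comp (dmap k θ N q i) = 0) ∧
    (∀ i j, i ≠ j →
      (dmap k θ N q i).comp (dmap k θ N q j) +
        (dmap k θ N q j).comp (dmap k θ N q i) = 0) ∧
    ((∑ i, dmap k θ N q i).comp (∑ i, dmap k θ N q i) = 0) := by
  have hself : ∀ i, (dmap k θ N q i).comp (dmap k θ N q i) = 0 := dd_self k θ N q hN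
  have hanti : ∀ i j, i ≠ j →
      (dmap k θ N q i).comp (dmap k θ N q j) +
        (dmap k θ N q j).comp (dmap k θ N q i) = 0 := by
    intro i j hij
    rcases hij.lt_or_gt with h | h
    · exact dd_anticomm k θ N q i j h
    · rw [add_comm]; exact dd_anticomm k θ N q j i h
  refine ⟨hself, hanti, ?_⟩
  have hexp : (∑ i, dmap k θ N q i).comp (∑ i, dmap k θ N q i)
      = ∑ i, ∑ j, (dmap k θ N q i).comp (dmap k θ N q j) := by
    refine LinearMap.ext fun x => ?_
    simp [LinearMap.sum_apply, LinearMap.comp_apply, map_sum]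
    rw [Finset.sum_comm]
  have hprod := Finset.sum_product' (Finset.univ : Finset (Fin θ)) (Finset.univ : Finset (Fin θ))
    (fun i j => (dmap k θ N q i).comp (dmap k θ N q j))
  rw [hexp, ← hprod]
  refine Finset.sum_involution (fun p _ => p.swap) ?_ ?_ (fun _ _ => Finset.mem_univ _)
    (fun _ _ => Prod.swap_swap _)
  · intro p _
    by_cases hp : p.1 = p.2
    · simp [Prod.swap, hp, hself]
    · exact hanti p.1 p.2 hp
  · intro p _ hf hsw
    apply hf
    have hp : p.1 = p.2 := by
      have := congrArg Prod.fst hsw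
      simpa [Prod.swap] using this.symm
    rw [hp]
    exact hself p.2
end

section
/- Let E_1^{p,q} ⇒ E_∞^{p+q} be a multiplicative spectral sequence of k-algebras concentrated in the half plane p+q ≥ 0, and let A^{*,*} be a bigraded commutative k-algebra concentrated in even total degrees with a bigraded algebra map φ : A^{*,*} → E_1^{*,*} such that (i) E_1^{*,*} is a Noetherian A^{*,*}-module via φ, and (ii) the image of φ consists of permanent cycles. Then E_∞^* is a Noetherian module over Tot(A^{*,*}). -/
open CategoryTheory

/-- A multiplicative spectral sequence of `k`-algebras, concentrated in the half plane
`p + q ≥ 0`, starting at its `E_1`-page.  `E r` denotes the page `E_{r+1}`, so the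
differential on `E r` has bidegree `(r+1, -r)`.  The limit term `E_∞` is encoded by
`Einf`, together with the map `pinf` assigning to every permanent cycle (a compatible
sequence of classes on all pages) its stable value in `E_∞`. -/
structure MultSS (k : Type) [Field k] where
  /-- the pages: `E r` is the page `E_{r+1}` -/
  E : ℕ → ℤ → ℤ → ModuleCat k
  /-- concentration in the half plane `p + q ≥ 0` -/
  halfplane : ∀ r p q, p + q < 0 → Subsingleton (E r p q)
  /-- the multiplication on each page -/
  mul : ∀ {r : ℕ} {p q p' q' : ℤ}, E r p q →ₗ[k] E r p' q' →ₗ[k] E r (p + p') (q + q')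
  /-- the unit of each page -/
  one : ∀ r, E r 0 0
  mul_assoc : ∀ {r : ℕ} {p₁ q₁ p₂ q₂ p₃ q₃ : ℤ} (x : E r p₁ q₁) (y : E r p₂ q₂)
    (z : E r p₃ q₃), HEq (mul (mul x y) z) (mul x (mul y z))
  one_mul : ∀ {r : ℕ} {p q : ℤ} (x : E r p q), HEq (mul (one r) x) x
  mul_one : ∀ {r : ℕ} {p q : ℤ} (x : E r p q), HEq (mul x (one r)) x
  /-- the differentials -/
  d : ∀ r p q, E r p q →ₗ[k] E r (p + (r + 1)) (q - r)
  d_squared : ∀ r p q (x : E r p q), d r _ _ (d r p q x) = 0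
  /-- the graded Leibniz rule -/
  leibniz : ∀ (r : ℕ) (p q p' q' : ℤ) (x : E r p q) (y : E r p' q'),
    d r _ _ (mul x y) =
      cast (by rw [show p + (r+1) + p' = p + p' + (r+1) from by ring,
        show q - r + q' = q + q' - r from by ring] :
          (E r (p + (r+1) + p') (q - r + q') : Type) = E r (p + p' + (r+1)) (q + q' - r))
        (mul (d r p q x) y) +
      cast (by rw [show p + (p' + (r+1)) = p + p' + (r+1) from by ring,
        show q + (q' - r) = q + q' - r from by ring] :
          (E r (p + (p' + (r+1))) (q + (q' - r)) : Type) = E r (p + p' + (r+1)) (q + q' - r))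
        ((((p + q).negOnePow : ℤˣ) : ℤ) • mul x (d r p' q' y))
  /-- passage to the next page: every class killed by the differential has a residue -/
  proj : ∀ r p q (x : E r p q), d r p q x = 0 → E (r + 1) p q
  proj_add : ∀ r p q (x y : E r p q) (hx : d r p q x = 0) (hy : d r p q y = 0)
    (hxy : d r p q (x + y) = 0), proj r p q (x + y) hxy = proj r p q x hx + proj r p q y hy
  proj_smul : ∀ r p q (c : k) (x : E r p q) (hx : d r p q x = 0)
    (hcx : d r p q (c • x) = 0), proj r p q (c • x) hcx = c • proj r p q x hx
  proj_one : ∀ r (h : d r 0 0 (one r) = 0), proj r 0 0 (one r) h = one (r + 1)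
  proj_mul : ∀ r p q p' q' (x : E r p q) (y : E r p' q') (hx : d r p q x = 0)
    (hy : d r p' q' y = 0) (hxy : d r _ _ (mul x y) = 0),
    proj r _ _ (mul x y) hxy = mul (proj r p q x hx) (proj r p' q' y hy)
  proj_surjective : ∀ r p q (y : E (r + 1) p q), ∃ x h, proj r p q x h = y
  /-- the kernel of the passage to the next page consists of the boundaries -/
  proj_eq_zero_iff : ∀ r p q (x : E r p q) (h : d r p q x = 0),
    proj r p q x h = 0 ↔ ∃ w : E r (p - (r + 1)) (q + r),
      d r _ _ w = cast (by rw [show p - (r+1) + (r+1) = p from by ring,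
        show q + r - r = q from by ring] :
          (E r p q : Type) = E r (p - (r+1) + (r+1)) (q + r - r)) x
  /-- the limit page `E_∞` -/
  Einf : ℤ → ℤ → ModuleCat k
  mulInf : ∀ {p q p' q' : ℤ}, Einf p q →ₗ[k] Einf p' q' →ₗ[k] Einf (p + p') (q + q')
  /-- the stable value in `E_∞` of a permanent cycle, given as the compatible sequence
  of its residues on all pages -/
  pinf : ∀ p q (c : ∀ s, E s p q),
    (∀ s, ∃ h : d s p q (c s) = 0, proj s p q (c s) h = c (s + 1)) → Einf p q
  pinf_surjective : ∀ p q (y : Einf p q), ∃ c hc, pinf p q c hc = y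
  pinf_eq_zero_iff : ∀ p q c hc, pinf p q c hc = 0 ↔ ∃ s, c s = 0
  pinf_add : ∀ p q c c' hc hc' hcc',
    pinf p q (fun s => c s + c' s) hcc' = pinf p q c hc + pinf p q c' hc'
  pinf_smul : ∀ p q (a : k) c hc hac,
    pinf p q (fun s => a • c s) hac = a • pinf p q c hc
  pinf_mul : ∀ p q p' q' c hc c' hc' hcc',
    pinf (p + p') (q + q') (fun s => mul (c s) (c' s)) hcc' =
      mulInf (pinf p q c hc) (pinf p' q' c' hc')

variable (k : Type) [Field k]

/-- A family of graded `k`-submodules of the `E_1`-page which is invariant under the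
action (via `φ` and the product of the spectral sequence) of the bigraded algebra `𝒜`. -/
def IsInvFamilyE1 (SS : MultSS k) {Atot : Type} [CommRing Atot] [Algebra k Atot]
    (𝒜 : ℤ × ℤ → Submodule k Atot) (φ : ∀ pq : ℤ × ℤ, 𝒜 pq →ₗ[k] SS.E 0 pq.1 pq.2)
    (N : ∀ p q : ℤ, Submodule k (SS.E 0 p q)) : Prop :=
  ∀ (pq : ℤ × ℤ) (a : 𝒜 pq) (p q : ℤ) (x : SS.E 0 p q),
    x ∈ N p q → SS.mul (φ pq a) x ∈ N (pq.1 + p) (pq.2 + q)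

/-- A family of graded `k`-submodules of the `E_∞`-term which is invariant under the
action of the bigraded algebra `𝒜` (acting through the stable values of the permanent
cycles `φ(a)`). -/
def IsInvFamilyInf (SS : MultSS k) {Atot : Type} [CommRing Atot] [Algebra k Atot]
    (𝒜 : ℤ × ℤ → Submodule k Atot) (φ : ∀ pq : ℤ × ℤ, 𝒜 pq →ₗ[k] SS.E 0 pq.1 pq.2)
    (N : ∀ p q : ℤ, Submodule k (SS.Einf p q)) : Prop :=
  ∀ (pq : ℤ × ℤ) (a : 𝒜 pq) (c : ∀ s, SS.E s pq.1 pq.2)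
    (hc : ∀ s, ∃ h : SS.d s pq.1 pq.2 (c s) = 0, SS.proj s pq.1 pq.2 (c s) h = c (s + 1)),
    c 0 = φ pq a →
    ∀ (p q : ℤ) (x : SS.Einf p q),
      x ∈ N p q → SS.mulInf (SS.pinf pq.1 pq.2 c hc) x ∈ N (pq.1 + p) (pq.2 + q)

section Aux

variable {k} (SS : MultSS k)

lemma MultSS.proj_congr {r : ℕ} {p q : ℤ} {x y : SS.E r p q} (hxy : x = y)
    (hx : SS.d r p q x = 0) (hy : SS.d r p q y = 0) :
    SS.proj r p q x hx = SS.proj r p q y hy := by subst hxy; rfl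

lemma MultSS.proj_zero (r : ℕ) (p q : ℤ) (h : SS.d r p q 0 = 0) :
    SS.proj r p q 0 h = 0 := by
  have h' : SS.d r p q ((0 : k) • (0 : SS.E r p q)) = 0 := by rw [zero_smul]; exact h
  have h2 := SS.proj_smul r p q 0 0 h h'
  rw [SS.proj_congr (zero_smul k (0 : SS.E r p q)) h' h] at h2
  rw [h2, zero_smul]

lemma castE_zero {r : ℕ} {p q p' q' : ℤ} (hp : p = p') (hq : q = q')
    (e : (SS.E r p q : Type) = SS.E r p' q') :
    cast e (0 : SS.E r p q) = (0 : SS.E r p' q') := by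
  subst hp; subst hq; exact cast_eq e 0

lemma MultSS.d_mul_zero {r : ℕ} {p q p' q' : ℤ} (x : SS.E r p q) (y : SS.E r p' q')
    (hx : SS.d r p q x = 0) (hy : SS.d r p' q' y = 0) :
    SS.d r (p + p') (q + q') (SS.mul x y) = 0 := by
  rw [SS.leibniz r p q p' q' x y, hx, hy]
  simp only [map_zero, LinearMap.zero_apply, smul_zero]
  rw [castE_zero SS (by ring) (by ring), castE_zero SS (by ring) (by ring), add_zero]

lemma MultSS.seq_ext {p q : ℤ} (c c' : ∀ s, SS.E s p q)
    (hc : ∀ s, ∃ h : SS.d s p q (c s) = 0, SS.proj s p q (c s) h = c (s + 1))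
    (hc' : ∀ s, ∃ h : SS.d s p q (c' s) = 0, SS.proj s p q (c' s) h = c' (s + 1))
    (h0 : c 0 = c' 0) : c = c' := by
  funext s
  induction s with
  | zero => exact h0
  | succ n ih =>
    obtain ⟨h1, hp1⟩ := hc n
    obtain ⟨h2, hp2⟩ := hc' n
    rw [← hp1, ← hp2]
    exact SS.proj_congr ih h1 h2

lemma MultSS.pinf_congr {p q : ℤ} {c c' : ∀ s, SS.E s p q} (h : c = c')
    (hc : ∀ s, ∃ h : SS.d s p q (c s) = 0, SS.proj s p q (c s) h = c (s + 1))
    (hc' : ∀ s, ∃ h : SS.d s p q (c' s) = 0, SS.proj s p q (c' s) h = c' (s + 1)) :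
    SS.pinf p q c hc = SS.pinf p q c' hc' := by subst h; rfl

lemma MultSS.perm_zero (p q : ℤ) :
    ∀ s, ∃ h : SS.d s p q ((fun _ => 0 : ∀ s, SS.E s p q) s) = 0,
      SS.proj s p q ((fun _ => 0 : ∀ s, SS.E s p q) s) h =
        (fun _ => 0 : ∀ s, SS.E s p q) (s + 1) :=
  fun s => ⟨map_zero _, SS.proj_zero s p q _⟩

lemma MultSS.perm_add {p q : ℤ} {c c' : ∀ s, SS.E s p q}
    (hc : ∀ s, ∃ h : SS.d s p q (c s) = 0, SS.proj s p q (c s) h = c (s + 1))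
    (hc' : ∀ s, ∃ h : SS.d s p q (c' s) = 0, SS.proj s p q (c' s) h = c' (s + 1)) :
    ∀ s, ∃ h : SS.d s p q ((fun s => c s + c' s) s) = 0,
      SS.proj s p q ((fun s => c s + c' s) s) h = (fun s => c s + c' s) (s + 1) := by
  intro s
  obtain ⟨h1, hp1⟩ := hc s
  obtain ⟨h2, hp2⟩ := hc' s
  refine ⟨by simp only [map_add, h1, h2, add_zero], ?_⟩
  simp only
  rw [SS.proj_add s p q _ _ h1 h2, hp1, hp2]

lemma MultSS.perm_smul {p q : ℤ} (a : k) {c : ∀ s, SS.E s p q}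
    (hc : ∀ s, ∃ h : SS.d s p q (c s) = 0, SS.proj s p q (c s) h = c (s + 1)) :
    ∀ s, ∃ h : SS.d s p q ((fun s => a • c s) s) = 0,
      SS.proj s p q ((fun s => a • c s) s) h = (fun s => a • c s) (s + 1) := by
  intro s
  obtain ⟨h1, hp1⟩ := hc s
  refine ⟨by simp only [map_smul, h1, smul_zero], ?_⟩
  simp only
  rw [SS.proj_smul s p q a _ h1, hp1]

lemma MultSS.perm_mul {p q p' q' : ℤ} {c : ∀ s, SS.E s p q} {c' : ∀ s, SS.E s p' q'}
    (hc : ∀ s, ∃ h : SS.d s p q (c s) = 0, SS.proj s p q (c s) h = c (s + 1))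
    (hc' : ∀ s, ∃ h : SS.d s p' q' (c' s) = 0, SS.proj s p' q' (c' s) h = c' (s + 1)) :
    ∀ s, ∃ h : SS.d s (p + p') (q + q') ((fun s => SS.mul (c s) (c' s)) s) = 0,
      SS.proj s (p + p') (q + q') ((fun s => SS.mul (c s) (c' s)) s) h =
        (fun s => SS.mul (c s) (c' s)) (s + 1) := by
  intro s
  obtain ⟨h1, hp1⟩ := hc s
  obtain ⟨h2, hp2⟩ := hc' s
  refine ⟨SS.d_mul_zero _ _ h1 h2, ?_⟩
  simp only
  rw [SS.proj_mul s p q p' q' _ _ h1 h2, hp1, hp2]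

end Aux

/-- **Finite generation lemma for multiplicative spectral sequences**
(part (a) of the Friedlander–Suslin style lemma).
Let `E_1^{p,q} ⇒ E_∞^{p+q}` be a multiplicative spectral sequence of `k`-algebras in the
half plane `p + q ≥ 0`, `𝒜` a bigraded commutative `k`-algebra concentrated in even total
degrees, and `φ : 𝒜 → E_1` a bigraded algebra map such that `E_1` is a Noetherian
`𝒜`-module (formulated as the ascending chain condition for `𝒜`-invariant families of
graded submodules) and the image of `φ` consists of permanent cycles.  Then `E_∞` is a
Noetherian module over `Tot(𝒜)`. -/
theorem spectral_sequence_noetherian (SS : MultSS k)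
    (Atot : Type) [CommRing Atot] [Algebra k Atot]
    (𝒜 : ℤ × ℤ → Submodule k Atot) [GradedAlgebra 𝒜]
    -- `𝒜` is concentrated in even total degrees
    (heven : ∀ pq : ℤ × ℤ, ¬ Even (pq.1 + pq.2) → 𝒜 pq = ⊥)
    -- `φ` is a bigraded algebra map `𝒜 → E_1`
    (φ : ∀ pq : ℤ × ℤ, 𝒜 pq →ₗ[k] SS.E 0 pq.1 pq.2)
    (hφone : ∀ h1 : (1 : Atot) ∈ 𝒜 (0, 0), φ (0, 0) ⟨1, h1⟩ = SS.one 0)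
    (hφmul : ∀ (pq pq' : ℤ × ℤ) (a : 𝒜 pq) (b : 𝒜 pq')
      (hab : (a : Atot) * (b : Atot) ∈ 𝒜 (pq + pq')),
      φ (pq + pq') ⟨(a : Atot) * b, hab⟩ = SS.mul (φ pq a) (φ pq' b))
    -- (ii) the image of `φ` consists of permanent cycles
    (hperm : ∀ (pq : ℤ × ℤ) (a : 𝒜 pq), ∃ (c : ∀ s, SS.E s pq.1 pq.2)
      (hc : ∀ s, ∃ h : SS.d s pq.1 pq.2 (c s) = 0,
        SS.proj s pq.1 pq.2 (c s) h = c (s + 1)), c 0 = φ pq a)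
    -- (i) `E_1` is a Noetherian `𝒜`-module
    (hNoeth : ∀ (ch : ℕ → ∀ p q : ℤ, Submodule k (SS.E 0 p q)),
      (∀ n, IsInvFamilyE1 k SS 𝒜 φ (ch n)) →
      (∀ n p q, ch n p q ≤ ch (n + 1) p q) →
      ∃ n₀, ∀ n, n₀ ≤ n → ch n = ch n₀) :
    -- conclusion: `E_∞` is a Noetherian `Tot(𝒜)`-module
    ∀ (ch : ℕ → ∀ p q : ℤ, Submodule k (SS.Einf p q)),
      (∀ n, IsInvFamilyInf k SS 𝒜 φ (ch n)) →
      (∀ n p q, ch n p q ≤ ch (n + 1) p q) →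
      ∃ n₀, ∀ n, n₀ ≤ n → ch n = ch n₀ := by
  intro ch hinv hmono
  have chmono : ∀ m n, m ≤ n → ∀ p q, ch m p q ≤ ch n p q := by
    intro m n hmn
    induction n, hmn using Nat.le_induction with
    | base => intro p q; exact le_rfl
    | succ n hn ih => intro p q; exact le_trans (ih p q) (hmono n p q)
  -- the pulled-back chain of invariant families on the `E_1`-page
  set N : ℕ → ∀ p q : ℤ, Submodule k (SS.E 0 p q) := fun n p q =>
    { carrier := {x | ∃ (c : ∀ s, SS.E s p q)
        (hc : ∀ s, ∃ h : SS.d s p q (c s) = 0, SS.proj s p q (c s) h = c (s + 1)),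
        c 0 = x ∧ SS.pinf p q c hc ∈ ch n p q}
      zero_mem' := ⟨fun _ => 0, SS.perm_zero p q, rfl, by
        rw [(SS.pinf_eq_zero_iff p q _ (SS.perm_zero p q)).2 ⟨0, rfl⟩]
        exact (ch n p q).zero_mem⟩
      add_mem' := by
        rintro x y ⟨c, hc, rfl, hm⟩ ⟨c', hc', rfl, hm'⟩
        exact ⟨fun s => c s + c' s, SS.perm_add hc hc', rfl, by
          rw [SS.pinf_add p q c c' hc hc' (SS.perm_add hc hc')]
          exact add_mem hm hm'⟩
      smul_mem' := by
        rintro a x ⟨c, hc, rfl, hm⟩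
        exact ⟨fun s => a • c s, SS.perm_smul a hc, rfl, by
          rw [SS.pinf_smul p q a c hc (SS.perm_smul a hc)]
          exact Submodule.smul_mem _ a hm⟩ } with hN
  have hmem : ∀ n p q (x : SS.E 0 p q), x ∈ N n p q ↔ ∃ (c : ∀ s, SS.E s p q)
      (hc : ∀ s, ∃ h : SS.d s p q (c s) = 0, SS.proj s p q (c s) h = c (s + 1)),
      c 0 = x ∧ SS.pinf p q c hc ∈ ch n p q := fun n p q x => Iff.rfl
  have hNinv : ∀ n, IsInvFamilyE1 k SS 𝒜 φ (N n) := by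
    intro n pq a p q x hx
    obtain ⟨c, hc, hc0, hm⟩ := (hmem n p q x).1 hx
    obtain ⟨ca, hca, hca0⟩ := hperm pq a
    refine (hmem n _ _ _).2 ⟨fun s => SS.mul (ca s) (c s), SS.perm_mul hca hc,
      by show SS.mul (ca 0) (c 0) = SS.mul (φ pq a) x; rw [hca0, hc0], ?_⟩
    rw [SS.pinf_mul pq.1 pq.2 p q ca hca c hc (SS.perm_mul hca hc)]
    exact hinv n pq a ca hca hca0 p q _ hm
  have hNmono : ∀ n p q, N n p q ≤ N (n + 1) p q := by
    intro n p q x hx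
    obtain ⟨c, hc, h0, hm⟩ := (hmem n p q x).1 hx
    exact (hmem (n + 1) p q x).2 ⟨c, hc, h0, hmono n p q hm⟩
  obtain ⟨n₀, hn₀⟩ := hNoeth N hNinv hNmono
  refine ⟨n₀, fun n hn => ?_⟩
  funext p q
  refine le_antisymm ?_ (chmono n₀ n hn p q)
  intro x hx
  obtain ⟨c, hc, hpc⟩ := SS.pinf_surjective p q x
  have hc0 : c 0 ∈ N n p q := (hmem n p q (c 0)).2 ⟨c, hc, rfl, by rw [hpc]; exact hx⟩
  rw [hn₀ n hn] at hc0
  obtain ⟨c', hc', h0, hm⟩ := (hmem n₀ p q (c 0)).1 hc0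
  have hcc : c' = c := SS.seq_ext c' c hc' hc h0
  subst hcc
  rw [SS.pinf_congr rfl hc' hc, hpc] at hm
  exact hm
end

section
/- If a module spectral sequence Ẽ over a multiplicative spectral sequence E satisfies that Ẽ_1^{*,*} is a Noetherian module over a bigraded commutative algebra A^{*,*} of even-total-degree permanent cycles acting through φ : A → E_1, then Ẽ_∞^* is a finitely generated E_∞^*-module. -/
open CategoryTheory

/-- A spectral sequence `Ẽ` which is a bigraded module over the multiplicative spectral
sequence `SS`; again `F r` denotes the page `Ẽ_{r+1}`, and `Finf` the limit term. -/
structure ModSS (k : Type) [Field k] (SS : MultSS k) where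
  F : ℕ → ℤ → ℤ → ModuleCat k
  /-- the module structure of each page over the corresponding page of `SS` -/
  smul : ∀ {r : ℕ} {p q p' q' : ℤ}, SS.E r p q →ₗ[k] F r p' q' →ₗ[k] F r (p + p') (q + q')
  one_smul : ∀ {r : ℕ} {p q : ℤ} (m : F r p q), HEq (smul (SS.one r) m) m
  mul_smul : ∀ {r : ℕ} {p₁ q₁ p₂ q₂ p₃ q₃ : ℤ} (x : SS.E r p₁ q₁) (y : SS.E r p₂ q₂)
    (m : F r p₃ q₃), HEq (smul (SS.mul x y) m) (smul x (smul y m))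
  dF : ∀ r p q, F r p q →ₗ[k] F r (p + (r + 1)) (q - r)
  dF_squared : ∀ r p q (m : F r p q), dF r _ _ (dF r p q m) = 0
  /-- the graded Leibniz rule for the module structure -/
  leibnizF : ∀ (r : ℕ) (p q p' q' : ℤ) (x : SS.E r p q) (m : F r p' q'),
    dF r _ _ (smul x m) =
      cast (by rw [show p + (r+1) + p' = p + p' + (r+1) from by ring,
        show q - r + q' = q + q' - r from by ring] :
          (F r (p + (r+1) + p') (q - r + q') : Type) = F r (p + p' + (r+1)) (q + q' - r))
        (smul (SS.d r p q x) m) +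
      cast (by rw [show p + (p' + (r+1)) = p + p' + (r+1) from by ring,
        show q + (q' - r) = q + q' - r from by ring] :
          (F r (p + (p' + (r+1))) (q + (q' - r)) : Type) = F r (p + p' + (r+1)) (q + q' - r))
        ((((p + q).negOnePow : ℤˣ) : ℤ) • smul x (dF r p' q' m))
  projF : ∀ r p q (m : F r p q), dF r p q m = 0 → F (r + 1) p q
  projF_add : ∀ r p q (x y : F r p q) (hx : dF r p q x = 0) (hy : dF r p q y = 0)
    (hxy : dF r p q (x + y) = 0),
    projF r p q (x + y) hxy = projF r p q x hx + projF r p q y hy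
  projF_smulk : ∀ r p q (c : k) (x : F r p q) (hx : dF r p q x = 0)
    (hcx : dF r p q (c • x) = 0), projF r p q (c • x) hcx = c • projF r p q x hx
  projF_smul : ∀ r p q p' q' (x : SS.E r p q) (m : F r p' q') (hx : SS.d r p q x = 0)
    (hm : dF r p' q' m = 0) (hxm : dF r _ _ (smul x m) = 0),
    projF r _ _ (smul x m) hxm = smul (SS.proj r p q x hx) (projF r p' q' m hm)
  projF_surjective : ∀ r p q (y : F (r + 1) p q), ∃ m h, projF r p q m h = y
  projF_eq_zero_iff : ∀ r p q (m : F r p q) (h : dF r p q m = 0),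
    projF r p q m h = 0 ↔ ∃ w : F r (p - (r + 1)) (q + r),
      dF r _ _ w = cast (by rw [show p - (r+1) + (r+1) = p from by ring,
        show q + r - r = q from by ring] :
          (F r p q : Type) = F r (p - (r+1) + (r+1)) (q + r - r)) m
  Finf : ℤ → ℤ → ModuleCat k
  smulInf : ∀ {p q p' q' : ℤ}, SS.Einf p q →ₗ[k] Finf p' q' →ₗ[k] Finf (p + p') (q + q')
  pinfF : ∀ p q (c : ∀ s, F s p q),
    (∀ s, ∃ h : dF s p q (c s) = 0, projF s p q (c s) h = c (s + 1)) → Finf p q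
  pinfF_surjective : ∀ p q (y : Finf p q), ∃ c hc, pinfF p q c hc = y
  pinfF_eq_zero_iff : ∀ p q c hc, pinfF p q c hc = 0 ↔ ∃ s, c s = 0
  pinfF_add : ∀ p q c c' hc hc' hcc',
    pinfF p q (fun s => c s + c' s) hcc' = pinfF p q c hc + pinfF p q c' hc'
  pinfF_smulk : ∀ p q (a : k) c hc hac,
    pinfF p q (fun s => a • c s) hac = a • pinfF p q c hc
  pinfF_smul : ∀ p q p' q' (c : ∀ s, SS.E s p q) hc (c' : ∀ s, F s p' q') hc' hcc',
    pinfF (p + p') (q + q') (fun s => smul (c s) (c' s)) hcc' =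
      smulInf (SS.pinf p q c hc) (pinfF p' q' c' hc')

variable (k : Type) [Field k]

/-- An `𝒜`-invariant family of graded `k`-submodules of the `Ẽ_1`-page of a module
spectral sequence. -/
def IsInvFamilyF1 (SS : MultSS k) (FS : ModSS k SS) {Atot : Type} [CommRing Atot]
    [Algebra k Atot] (𝒜 : ℤ × ℤ → Submodule k Atot)
    (φ : ∀ pq : ℤ × ℤ, 𝒜 pq →ₗ[k] SS.E 0 pq.1 pq.2)
    (N : ∀ p q : ℤ, Submodule k (FS.F 0 p q)) : Prop :=
  ∀ (pq : ℤ × ℤ) (a : 𝒜 pq) (p q : ℤ) (x : FS.F 0 p q),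
    x ∈ N p q → FS.smul (φ pq a) x ∈ N (pq.1 + p) (pq.2 + q)

/-! Every element of `Ẽ_∞` is the stable value of a permanent cycle of `Ẽ_1`, and taking stable
values is `k`-linear and turns `φ(a) • m` into `ā • m̄`, where `ā ∈ E_∞` is the stable value of
the permanent cycle `φ(a)`. Since chains of `𝒜`-invariant families in `Ẽ_1` stabilise, among
the `𝒜`-spans of finite lists of permanent cycles there is a maximal one, and maximality forces
it to contain every permanent cycle. The stable values of that list then generate `Ẽ_∞`. -/

namespace MultSS

variable {k} (SS : MultSS k)

def IsPermanent (p q : ℤ) (c : ∀ s, SS.E s p q) : Prop :=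
  ∀ s, ∃ h : SS.d s p q (c s) = 0, SS.proj s p q (c s) h = c (s + 1)

end MultSS

namespace ModSS

section PermanentCycles

variable {k} {SS : MultSS k} (FS : ModSS k SS)

def IsPermanent (p q : ℤ) (c : ∀ s, FS.F s p q) : Prop :=
  ∀ s, ∃ h : FS.dF s p q (c s) = 0, FS.projF s p q (c s) h = c (s + 1)

theorem projF_congr {r : ℕ} {p q : ℤ} {x x' : FS.F r p q} (e : x = x') (h : FS.dF r p q x = 0)
    (h' : FS.dF r p q x' = 0) : FS.projF r p q x h = FS.projF r p q x' h' := by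
  subst e; rfl

theorem projF_zero (r : ℕ) (p q : ℤ) (h : FS.dF r p q 0 = 0) : FS.projF r p q 0 h = 0 := by
  have h00 : FS.dF r p q (0 + 0) = 0 := by rw [add_zero]; exact h
  simpa [FS.projF_congr (add_zero 0) h00 h] using FS.projF_add r p q 0 0 h h h00

theorem cast_F_zero (r : ℕ) {p q p' q' : ℤ} (hp : p = p') (hq : q = q')
    (h : (FS.F r p q : Type) = FS.F r p' q') : cast h (0 : FS.F r p q) = 0 := by
  subst hp hq; rfl

theorem dF_smul_eq_zero {r : ℕ} {p q p' q' : ℤ} {e : SS.E r p q} {x : FS.F r p' q'}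
    (he : SS.d r p q e = 0) (hx : FS.dF r p' q' x = 0) : FS.dF r _ _ (FS.smul e x) = 0 := by
  rw [FS.leibnizF, he, hx, map_zero, LinearMap.zero_apply, map_zero, smul_zero,
    FS.cast_F_zero r (by ring) (by ring), FS.cast_F_zero r (by ring) (by ring), add_zero]

namespace IsPermanent

variable {FS} {p q : ℤ} {c c' : ∀ s, FS.F s p q}

theorem zero : FS.IsPermanent p q 0 :=
  fun s => ⟨map_zero _, FS.projF_zero s p q _⟩

theorem add (hc : FS.IsPermanent p q c) (hc' : FS.IsPermanent p q c') :
    FS.IsPermanent p q (fun s => c s + c' s) := fun s =>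
  have ⟨h, e⟩ := hc s
  have ⟨h', e'⟩ := hc' s
  ⟨by rw [map_add, h, h', add_zero], by rw [FS.projF_add s p q _ _ h h', e, e']⟩

theorem smulk (a : k) (hc : FS.IsPermanent p q c) :
    FS.IsPermanent p q (fun s => a • c s) := fun s =>
  have ⟨h, e⟩ := hc s
  ⟨by rw [map_smul, h, smul_zero], by rw [FS.projF_smulk s p q a _ h, e]⟩

theorem smul {A B : ℤ} {cE : ∀ s, SS.E s A B} (hcE : SS.IsPermanent A B cE)
    (hc : FS.IsPermanent p q c) :
    FS.IsPermanent (A + p) (B + q) (fun s => FS.smul (cE s) (c s)) := fun s =>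
  have ⟨hE, eE⟩ := hcE s
  have ⟨h, e⟩ := hc s
  ⟨FS.dF_smul_eq_zero hE h, by rw [FS.projF_smul s A B p q _ _ hE h, eE, e]⟩

theorem ext (hc : FS.IsPermanent p q c) (hc' : FS.IsPermanent p q c') (h0 : c 0 = c' 0) :
    c = c' := by
  funext s
  induction s with
  | zero => exact h0
  | succ s ih =>
    obtain ⟨h, e⟩ := hc s
    obtain ⟨h', e'⟩ := hc' s
    rw [← e, ← e']
    congr

end IsPermanent

def permanentCycles (p q : ℤ) : Submodule k (FS.F 0 p q) where
  carrier := {m | ∃ c, FS.IsPermanent p q c ∧ c 0 = m}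
  zero_mem' := ⟨0, IsPermanent.zero, rfl⟩
  add_mem' := by
    rintro _ _ ⟨c, hc, rfl⟩ ⟨c', hc', rfl⟩
    exact ⟨_, hc.add hc', rfl⟩
  smul_mem' := by
    rintro a _ ⟨c, hc, rfl⟩
    exact ⟨_, hc.smulk a, rfl⟩

theorem pinfF_eq_of_zero_eq {p q : ℤ} {c c' : ∀ s, FS.F s p q} (hc : FS.IsPermanent p q c)
    (hc' : FS.IsPermanent p q c') (h0 : c 0 = c' 0) : FS.pinfF p q c hc = FS.pinfF p q c' hc' := by
  obtain rfl := hc.ext hc' h0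
  rfl

theorem mem_permanentCycles {p q : ℤ} {m : FS.F 0 p q} :
    m ∈ FS.permanentCycles p q ↔ ∃ c, FS.IsPermanent p q c ∧ c 0 = m := Iff.rfl

noncomputable def permanentSeq {p q : ℤ} (m : FS.permanentCycles p q) : ∀ s, FS.F s p q :=
  (FS.mem_permanentCycles.mp m.2).choose

theorem isPermanent_permanentSeq {p q : ℤ} (m : FS.permanentCycles p q) :
    FS.IsPermanent p q (FS.permanentSeq m) :=
  (FS.mem_permanentCycles.mp m.2).choose_spec.1

@[simp]
theorem permanentSeq_zero {p q : ℤ} (m : FS.permanentCycles p q) : FS.permanentSeq m 0 = m :=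
  (FS.mem_permanentCycles.mp m.2).choose_spec.2

noncomputable def stableValue (p q : ℤ) : FS.permanentCycles p q →ₗ[k] FS.Finf p q where
  toFun m := FS.pinfF p q (FS.permanentSeq m) (FS.isPermanent_permanentSeq m)
  map_add' m m' := by
    have h := (FS.isPermanent_permanentSeq m).add (FS.isPermanent_permanentSeq m')
    exact (FS.pinfF_eq_of_zero_eq _ h (by simp)).trans (FS.pinfF_add p q _ _ _ _ h)
  map_smul' a m := by
    have h := (FS.isPermanent_permanentSeq m).smulk a
    exact (FS.pinfF_eq_of_zero_eq _ h (by simp)).trans (FS.pinfF_smulk p q a _ _ h)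

theorem stableValue_eq {p q : ℤ} {c : ∀ s, FS.F s p q} (hc : FS.IsPermanent p q c)
    (hm : c 0 ∈ FS.permanentCycles p q) : FS.stableValue p q ⟨c 0, hm⟩ = FS.pinfF p q c hc :=
  FS.pinfF_eq_of_zero_eq _ _ (FS.permanentSeq_zero _)

end PermanentCycles

section InvariantFamilies

variable {k} {SS : MultSS k} (FS : ModSS k SS) {Atot : Type} [CommRing Atot] [Algebra k Atot]
  {𝒜 : ℤ × ℤ → Submodule k Atot} (φ : ∀ pq : ℤ × ℤ, 𝒜 pq →ₗ[k] SS.E 0 pq.1 pq.2)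

def smulSpan (L : List (Σ pq : ℤ × ℤ, FS.F 0 pq.1 pq.2)) (p q : ℤ) :
    Submodule k (FS.F 0 p q) :=
  Submodule.span k {x | ∃ s ∈ L, ∃ (pq : ℤ × ℤ) (a : 𝒜 pq) (h1 : pq.1 + s.1.1 = p)
    (h2 : pq.2 + s.1.2 = q),
    x = cast (by rw [h1, h2] : (FS.F 0 (pq.1 + s.1.1) (pq.2 + s.1.2) : Type) = FS.F 0 p q)
      (FS.smul (φ pq a) s.2)}

theorem smulSpan_mono {L L' : List (Σ pq : ℤ × ℤ, FS.F 0 pq.1 pq.2)} (h : L ⊆ L') :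
    FS.smulSpan φ L ≤ FS.smulSpan φ L' := fun _ _ =>
  Submodule.span_mono fun _ ⟨s, hs, rest⟩ => ⟨s, h hs, rest⟩

theorem mem_smulSpan_self [SetLike.GradedMonoid 𝒜]
    (hφone : ∀ h1 : (1 : Atot) ∈ 𝒜 (0, 0), φ (0, 0) ⟨1, h1⟩ = SS.one 0)
    {L : List (Σ pq : ℤ × ℤ, FS.F 0 pq.1 pq.2)} {s : Σ pq : ℤ × ℤ, FS.F 0 pq.1 pq.2}
    (hs : s ∈ L) : s.2 ∈ FS.smulSpan φ L s.1.1 s.1.2 := by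
  have h1 : (1 : Atot) ∈ 𝒜 (0, 0) := SetLike.one_mem_graded 𝒜
  refine Submodule.subset_span ⟨s, hs, (0, 0), ⟨1, h1⟩, zero_add _, zero_add _, ?_⟩
  rw [hφone h1]
  exact (cast_eq_iff_heq.mpr (FS.one_smul s.2)).symm

theorem isInvFamilyF1_smulSpan [SetLike.GradedMonoid 𝒜]
    (hφmul : ∀ (pq pq' : ℤ × ℤ) (a : 𝒜 pq) (b : 𝒜 pq')
      (hab : (a : Atot) * (b : Atot) ∈ 𝒜 (pq + pq')),
      φ (pq + pq') ⟨(a : Atot) * b, hab⟩ = SS.mul (φ pq a) (φ pq' b))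
    (L : List (Σ pq : ℤ × ℤ, FS.F 0 pq.1 pq.2)) :
    IsInvFamilyF1 k SS FS 𝒜 φ (FS.smulSpan φ L) := by
  intro pq a p q x hx
  refine (Submodule.span_le (p := (FS.smulSpan φ L _ _).comap (FS.smul (φ pq a)))).mpr ?_ hx
  rintro _ ⟨s, hs, pq', b, rfl, rfl, rfl⟩
  have hab : (a : Atot) * b ∈ 𝒜 (pq + pq') := SetLike.mul_mem_graded a.2 b.2
  have key : HEq (FS.smul (φ (pq + pq') ⟨(a : Atot) * b, hab⟩) s.2)
      (FS.smul (φ pq a) (FS.smul (φ pq' b) s.2)) := by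
    rw [hφmul pq pq' a b hab]
    exact FS.mul_smul (φ pq a) (φ pq' b) s.2
  exact Submodule.subset_span ⟨s, hs, pq + pq', ⟨_, hab⟩, add_assoc _ _ _, add_assoc _ _ _,
    (cast_eq_iff_heq.mpr key).symm⟩

variable (𝒜) in
theorem wellFoundedGT_isInvFamilyF1
    (hNoethF : ∀ (ch : ℕ → ∀ p q : ℤ, Submodule k (FS.F 0 p q)),
      (∀ n, IsInvFamilyF1 k SS FS 𝒜 φ (ch n)) →
      (∀ n p q, ch n p q ≤ ch (n + 1) p q) →
      ∃ n₀, ∀ n, n₀ ≤ n → ch n = ch n₀) :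
    WellFoundedGT {N // IsInvFamilyF1 k SS FS 𝒜 φ N} := by
  refine wellFoundedGT_iff_monotone_chain_condition.mpr fun ch => ?_
  obtain ⟨n₀, hn₀⟩ := hNoethF (fun n => (ch n).1) (fun n => (ch n).2)
    (fun n => ch.monotone n.le_succ)
  exact ⟨n₀, fun n hn => Subtype.ext (hn₀ n hn).symm⟩

theorem exists_list_subset_smulSpan [SetLike.GradedMonoid 𝒜]
    [WellFoundedGT {N // IsInvFamilyF1 k SS FS 𝒜 φ N}]
    (hφone : ∀ h1 : (1 : Atot) ∈ 𝒜 (0, 0), φ (0, 0) ⟨1, h1⟩ = SS.one 0)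
    (hφmul : ∀ (pq pq' : ℤ × ℤ) (a : 𝒜 pq) (b : 𝒜 pq')
      (hab : (a : Atot) * (b : Atot) ∈ 𝒜 (pq + pq')),
      φ (pq + pq') ⟨(a : Atot) * b, hab⟩ = SS.mul (φ pq a) (φ pq' b))
    (Z : ∀ p q : ℤ, Set (FS.F 0 p q)) :
    ∃ L : List (Σ pq : ℤ × ℤ, FS.F 0 pq.1 pq.2), (∀ s ∈ L, s.2 ∈ Z s.1.1 s.1.2) ∧
      ∀ p q, Z p q ⊆ FS.smulSpan φ L p q := by
  obtain ⟨L, hLZ, hmax⟩ := exists_maximalFor_of_wellFoundedGT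
    (fun L : List (Σ pq : ℤ × ℤ, FS.F 0 pq.1 pq.2) => ∀ s ∈ L, s.2 ∈ Z s.1.1 s.1.2)
    (fun L => (⟨FS.smulSpan φ L, FS.isInvFamilyF1_smulSpan φ hφmul L⟩ :
      {N // IsInvFamilyF1 k SS FS 𝒜 φ N})) ⟨[], by simp⟩
  refine ⟨L, hLZ, fun p q m hm => ?_⟩
  let L' := ⟨(p, q), m⟩ :: L
  have hL'Z : ∀ s ∈ L', s.2 ∈ Z s.1.1 s.1.2 := by
    simpa [L', forall_eq_or_imp] using ⟨hm, hLZ⟩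
  have hle : FS.smulSpan φ L' ≤ FS.smulSpan φ L :=
    hmax hL'Z (FS.smulSpan_mono φ (List.subset_cons_self _ _))
  exact hle p q (FS.mem_smulSpan_self φ hφone List.mem_cons_self)

end InvariantFamilies

section StableValues

variable {k} {SS : MultSS k} (FS : ModSS k SS)

def smulInfSpan {ι : Type*} (pi qi : ι → ℤ) (y : ∀ i, FS.Finf (pi i) (qi i)) (p q : ℤ) :
    Submodule k (FS.Finf p q) :=
  Submodule.span k {z : FS.Finf p q |
    ∃ (i : ι) (p' q' : ℤ) (e : SS.Einf p' q') (h1 : p' + pi i = p) (h2 : q' + qi i = q),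
      z = cast (by rw [h1, h2] : (FS.Finf (p' + pi i) (q' + qi i) : Type) = FS.Finf p q)
        (FS.smulInf e (y i))}

theorem smul_mem_permanentCycles {A B p q : ℤ} {cE : ∀ s, SS.E s A B}
    (hcE : SS.IsPermanent A B cE) {m : FS.F 0 p q} (hm : m ∈ FS.permanentCycles p q) :
    FS.smul (cE 0) m ∈ FS.permanentCycles (A + p) (B + q) := by
  obtain ⟨c, hc, rfl⟩ := hm
  exact ⟨_, hc.smul hcE, rfl⟩

theorem stableValue_smul {A B p q : ℤ} {cE : ∀ s, SS.E s A B} (hcE : SS.IsPermanent A B cE)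
    (m : FS.permanentCycles p q) (hm : FS.smul (cE 0) ↑m ∈ FS.permanentCycles (A + p) (B + q)) :
    FS.stableValue (A + p) (B + q) ⟨FS.smul (cE 0) m, hm⟩ =
      FS.smulInf (SS.pinf A B cE hcE) (FS.stableValue p q m) := by
  obtain ⟨_, c, hc, rfl⟩ := m
  exact (FS.stableValue_eq (hc.smul hcE) hm).trans ((FS.pinfF_smul A B p q cE hcE c hc _).trans
    (congrArg _ (FS.stableValue_eq hc _).symm))

theorem smulSpan_le_map_stableValue {Atot : Type} [CommRing Atot] [Algebra k Atot]
    {𝒜 : ℤ × ℤ → Submodule k Atot} (φ : ∀ pq : ℤ × ℤ, 𝒜 pq →ₗ[k] SS.E 0 pq.1 pq.2)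
    (hperm : ∀ (pq : ℤ × ℤ) (a : 𝒜 pq), ∃ c, SS.IsPermanent pq.1 pq.2 c ∧ c 0 = φ pq a)
    (L : List (Σ pq : ℤ × ℤ, FS.F 0 pq.1 pq.2))
    (hL : ∀ s ∈ L, s.2 ∈ FS.permanentCycles s.1.1 s.1.2) (p q : ℤ) :
    FS.smulSpan φ L p q ≤
      ((FS.smulInfSpan (fun i => (L.get i).1.1) (fun i => (L.get i).1.2)
        (fun i => FS.stableValue _ _ ⟨(L.get i).2, hL _ (L.get_mem i)⟩) p q).comap
          (FS.stableValue p q)).map (FS.permanentCycles p q).subtype := by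
  refine Submodule.span_le.mpr ?_
  rintro _ ⟨s, hs, pq, a, rfl, rfl, rfl⟩
  obtain ⟨i, rfl⟩ := List.mem_iff_get.mp hs
  obtain ⟨cE, hcE, hcE0⟩ := hperm pq a
  rw [cast_eq, ← hcE0]
  have hm := FS.smul_mem_permanentCycles hcE (hL _ hs)
  refine ⟨⟨_, hm⟩, Submodule.mem_comap.mpr ?_, rfl⟩
  rw [FS.stableValue_smul hcE ⟨_, hL _ hs⟩ hm]
  exact Submodule.subset_span ⟨i, pq.1, pq.2, SS.pinf _ _ cE hcE, rfl, rfl, rfl⟩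

end StableValues

end ModSS

/-- **Finite generation lemma, part (b).**  If a module spectral sequence `Ẽ` over a
multiplicative spectral sequence `E` has Noetherian `E_1`-page over a bigraded commutative
algebra `𝒜` of even-total-degree permanent cycles acting through `φ : 𝒜 → E_1`, then
`Ẽ_∞` is a finitely generated `E_∞`-module. -/
theorem module_spectral_sequence_finitely_generated (SS : MultSS k) (FS : ModSS k SS)
    (Atot : Type) [CommRing Atot] [Algebra k Atot]
    (𝒜 : ℤ × ℤ → Submodule k Atot) [GradedAlgebra 𝒜]
    (φ : ∀ pq : ℤ × ℤ, 𝒜 pq →ₗ[k] SS.E 0 pq.1 pq.2)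
    (hφone : ∀ h1 : (1 : Atot) ∈ 𝒜 (0, 0), φ (0, 0) ⟨1, h1⟩ = SS.one 0)
    (hφmul : ∀ (pq pq' : ℤ × ℤ) (a : 𝒜 pq) (b : 𝒜 pq')
      (hab : (a : Atot) * (b : Atot) ∈ 𝒜 (pq + pq')),
      φ (pq + pq') ⟨(a : Atot) * b, hab⟩ = SS.mul (φ pq a) (φ pq' b))
    -- the image of `φ` consists of permanent cycles
    (hperm : ∀ (pq : ℤ × ℤ) (a : 𝒜 pq), ∃ (c : ∀ s, SS.E s pq.1 pq.2)
      (hc : ∀ s, ∃ h : SS.d s pq.1 pq.2 (c s) = 0,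
        SS.proj s pq.1 pq.2 (c s) h = c (s + 1)), c 0 = φ pq a)
    -- `Ẽ_1` is a Noetherian `𝒜`-module
    (hNoethF : ∀ (ch : ℕ → ∀ p q : ℤ, Submodule k (FS.F 0 p q)),
      (∀ n, IsInvFamilyF1 k SS FS 𝒜 φ (ch n)) →
      (∀ n p q, ch n p q ≤ ch (n + 1) p q) →
      ∃ n₀, ∀ n, n₀ ≤ n → ch n = ch n₀) :
    -- conclusion: `Ẽ_∞` is a finitely generated `E_∞`-module
    ∃ (n : ℕ) (pi qi : Fin n → ℤ) (y : ∀ i, FS.Finf (pi i) (qi i)),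
      ∀ (p q : ℤ) (x : FS.Finf p q),
        x ∈ Submodule.span k {z : FS.Finf p q |
          ∃ (i : Fin n) (p' q' : ℤ) (e : SS.Einf p' q')
            (h1 : p' + pi i = p) (h2 : q' + qi i = q),
            z = cast (by rw [h1, h2] : (FS.Finf (p' + pi i) (q' + qi i) : Type) = FS.Finf p q)
              (FS.smulInf e (y i))} := by
  have := FS.wellFoundedGT_isInvFamilyF1 𝒜 φ hNoethF
  obtain ⟨L, hLZ, hZL⟩ := FS.exists_list_subset_smulSpan φ hφone hφmul
    fun p q => FS.permanentCycles p q
  refine ⟨L.length, fun i => (L.get i).1.1, fun i => (L.get i).1.2,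
    fun i => FS.stableValue _ _ ⟨(L.get i).2, hLZ _ (L.get_mem i)⟩, fun p q x => ?_⟩
  obtain ⟨c, hc, rfl⟩ := FS.pinfF_surjective p q x
  have hc0 : c 0 ∈ FS.permanentCycles p q := ⟨c, hc, rfl⟩
  obtain ⟨m, hm, hmc⟩ := FS.smulSpan_le_map_stableValue φ
    (fun pq a => let ⟨cE, hcE, hcE0⟩ := hperm pq a; ⟨cE, hcE, hcE0⟩) L hLZ p q (hZL p q hc0)
  obtain rfl : m = ⟨c 0, hc0⟩ := Subtype.ext hmc
  rwa [← FS.stableValue_eq hc hc0]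
end
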